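/- Let (k₁, k₂, k₃) = (2, 2, 1), w₁ = (x⁻¹, 0, 0, 0, 0, (1/2)·x⁻²) and w₂ = (0, 0, 0, −x⁻¹, x⁻², 0) (components in the order (a₁₂, a₁₃, a₂₃, b₁, b₂, b₃)). Then E′(w₁), F′(w₁), E′(w₂), F′(w₂) ∈ B; whenever α·w₁ + β·w₂ ∈ B for α, β ∈ ℂ one has α = β = 0; and every z ∈ V with E′(z) ∈ B and F′(z) ∈ B lies in ℂ·w₁ + ℂ·w₂ + B. In other words, the 𝔰′-invariant part of H¹(ℂℙ¹, T₂) is two-dimensional with basis the classes of w₁ and w₂. -/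

import Mathlib

/-!
Modulo `B₀` only principal parts matter, and for `(k₁, k₂, k₃) = (2, 2, 1)` the conditions
defining `B₁` then make `B` the common kernel of eight explicit coefficient functionals
(`mem_B_221_iff`). Since `E′` and `F′` shift
degrees by `-1` and `+1`, the conditions `E′ z ∈ B`, `F′ z ∈ B` become linear relations among
finitely many coefficients of `z`; modulo `B` they leave exactly the two coefficients of `x⁻¹`
in `a₁₂` and `b₁` free, and these are realised by `w₁` and `w₂`.
-/

noncomputable section

open LaurentPolynomial

/-- `L = ℂ[x, x⁻¹]`, the Laurent polynomials over `ℂ`. -/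
abbrev L : Type := LaurentPolynomial ℂ

/-- The coefficient of `x^n` in a Laurent polynomial. -/
def coeffL (p : L) (n : ℤ) : ℂ := (AddMonoidAlgebra.coeff p : ℤ →₀ ℂ) n

lemma coeffL_zero (n : ℤ) : coeffL 0 n = 0 := rfl

lemma coeffL_add (a b : L) (n : ℤ) : coeffL (a + b) n = coeffL a n + coeffL b n := by
  unfold coeffL; erw [Finsupp.add_apply]; rfl

lemma coeffL_smul (c : ℂ) (a : L) (n : ℤ) : coeffL (c • a) n = c * coeffL a n := by
  unfold coeffL; erw [Finsupp.smul_apply]; rfl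

/-- `L₊`: Laurent polynomials involving only nonnegative powers of `x`. -/
def Lplus : Submodule ℂ L where
  carrier := {p | ∀ n : ℤ, n < 0 → coeffL p n = 0}
  zero_mem' := fun n _ => coeffL_zero n
  add_mem' := by intro a b ha hb n hn; rw [coeffL_add, ha n hn, hb n hn, add_zero]
  smul_mem' := by intro c p hp n hn; rw [coeffL_smul, hp n hn, mul_zero]

/-- `L₋`: Laurent polynomials involving only nonpositive powers of `x`. -/
def Lminus : Submodule ℂ L where
  carrier := {p | ∀ n : ℤ, 0 < n → coeffL p n = 0}
  zero_mem' := fun n _ => coeffL_zero n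
  add_mem' := by intro a b ha hb n hn; rw [coeffL_add, ha n hn, hb n hn, add_zero]
  smul_mem' := by intro c p hp n hn; rw [coeffL_smul, hp n hn, mul_zero]

/-- The derivative `d/dx` on Laurent polynomials. -/
def D (p : L) : L := Finsupp.sum (AddMonoidAlgebra.coeff p : ℤ →₀ ℂ) fun n a => ((n : ℂ) * a) • T (n - 1)

/-- `V = L⁶`, the model of Čech 1-cochains with values in `T₂`: a tuple
`v = (a₁₂, a₁₃, a₂₃, b₁, b₂, b₃)` (components `v 0, …, v 5`) encodes the
vector field `Σ_{i<j} a_{ij}(x)ξᵢξⱼ∂/∂x + Σ_t b_t(x)ξ₁ξ₂ξ₃∂/∂ξ_t` on `U₀ ∩ U₁`. -/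
abbrev V : Type := Fin 6 → L

/-- `B₀ = (L₊)⁶`: cochains holomorphic in `U₀`. -/
def B0 : Submodule ℂ V := Submodule.pi Set.univ fun _ => Lplus

/-- The linear map `v ↦ x^m · (v i)`. -/
def cndA (m : ℤ) (i : Fin 6) : V →ₗ[ℂ] L :=
  (LinearMap.mulLeft ℂ (T m)).comp (LinearMap.proj i)

/-- The linear map `v ↦ x^m · (v i − c·x⁻¹·(v j))`. -/
def cndB (m : ℤ) (c : ℂ) (i j : Fin 6) : V →ₗ[ℂ] L :=
  (LinearMap.mulLeft ℂ (T m)).comp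
    (LinearMap.proj i - c • (LinearMap.mulLeft ℂ (T (-1))).comp (LinearMap.proj j))

/-- `B₁`: cochains holomorphic in `U₁`, i.e. `v` with
`x^(kᵢ+kⱼ−2)·a_{ij} ∈ L₋` for all `i < j` and
`x^(d−k_t)·(b_t − σ_t·k_t·x⁻¹·a_{(t)}) ∈ L₋` for `t = 1, 2, 3`
(σ₁ = 1, σ₂ = −1, σ₃ = 1, a₍₁₎ = a₂₃, a₍₂₎ = a₁₃, a₍₃₎ = a₁₂, d = k₁+k₂+k₃). -/
def B1 (k1 k2 k3 : ℤ) : Submodule ℂ V :=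
  Lminus.comap (cndA (k1 + k2 - 2) 0) ⊓
  Lminus.comap (cndA (k1 + k3 - 2) 1) ⊓
  Lminus.comap (cndA (k2 + k3 - 2) 2) ⊓
  Lminus.comap (cndB (k2 + k3) ((k1 : ℂ)) 3 2) ⊓
  Lminus.comap (cndB (k1 + k3) (-(k2 : ℂ)) 4 1) ⊓
  Lminus.comap (cndB (k1 + k2) ((k3 : ℂ)) 5 0)

/-- The coboundary subspace `B = B₀ + B₁`. -/
def B (k1 k2 k3 : ℤ) : Submodule ℂ V := B0 ⊔ B1 k1 k2 k3

/-- Action of `e = ∂/∂x` on cocycles: the componentwise derivative. -/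
def Eop : V → V := fun v i => D (v i)

/-- Action of `f = ∂/∂y` on cocycles, with components
`a_{ij} ↦ (2 − kᵢ − kⱼ)·x·a_{ij} − x²·a_{ij}′` and
`b_t ↦ σ_t·k_t·a₍ₜ₎ − (d − k_t)·x·b_t − x²·b_t′`. -/
def Fop (k1 k2 k3 : ℤ) : V → V := fun v =>
  ![((2 - k1 - k2 : ℤ) : ℂ) • (T 1 * v 0) - T 2 * D (v 0),
    ((2 - k1 - k3 : ℤ) : ℂ) • (T 1 * v 1) - T 2 * D (v 1),
    ((2 - k2 - k3 : ℤ) : ℂ) • (T 1 * v 2) - T 2 * D (v 2),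
    (k1 : ℂ) • v 2 - ((k2 + k3 : ℤ) : ℂ) • (T 1 * v 3) - T 2 * D (v 3),
    -((k2 : ℂ) • v 1) - ((k1 + k3 : ℤ) : ℂ) • (T 1 * v 4) - T 2 * D (v 4),
    (k3 : ℂ) • v 0 - ((k1 + k2 : ℤ) : ℂ) • (T 1 * v 5) - T 2 * D (v 5)]

/-- `N(v) = (0, 0, a₁₃, −b₂, 0, 0)`; `e′ = ∂/∂x + ξ₂∂/∂ξ₁` acts by `E′ = E + N`. -/
def Nop : V → V := fun v => ![0, 0, v 1, -v 4, 0, 0]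

/-- `M(v) = (0, a₂₃, 0, 0, −b₁, 0)`; `f′ = ∂/∂y + η₁∂/∂η₂` acts by `F′ = F + M`. -/
def Mop : V → V := fun v => ![0, v 2, 0, 0, -v 3, 0]

/-- The action `E′ = E + N` of `e′ = ∂/∂x + ξ₂∂/∂ξ₁`. -/
def E'op : V → V := fun v => Eop v + Nop v

/-- The action `F′ = F + M` of `f′ = ∂/∂y + η₁∂/∂η₂`. -/
def F'op (k1 k2 k3 : ℤ) : V → V := fun v => Fop k1 k2 k3 v + Mop v

/-- `N″(v) = (0, a₁₂, a₁₃, −b₂, −b₃, 0)`;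
`e″ = ∂/∂x + ξ₂∂/∂ξ₁ + ξ₃∂/∂ξ₂` acts by `E″ = E + N″`. -/
def N''op : V → V := fun v => ![0, v 0, v 1, -v 4, -v 5, 0]

/-- `M″(v) = (2a₁₃, 2a₂₃, 0, 0, −2b₁, −2b₂)`;
`f″ = ∂/∂y + 2η₁∂/∂η₂ + 2η₂∂/∂η₃` acts by `F″ = F + M″`. -/
def M''op : V → V := fun v => ![(2 : ℂ) • v 1, (2 : ℂ) • v 2, 0, 0, -((2 : ℂ) • v 3), -((2 : ℂ) • v 4)]

/-- The action `E″ = E + N″` of `e″`. -/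
def E''op : V → V := fun v => Eop v + N''op v

/-- The action `F″ = F + M″` of `f″`. -/
def F''op (k1 k2 k3 : ℤ) : V → V := fun v => Fop k1 k2 k3 v + M''op v

lemma coeffL_neg (p : L) (n : ℤ) : coeffL (-p) n = -coeffL p n := rfl

lemma coeffL_sub (p q : L) (n : ℤ) : coeffL (p - q) n = coeffL p n - coeffL q n := rfl

lemma coeffL_T (m n : ℤ) : coeffL (T m) n = if m = n then 1 else 0 :=
  Finsupp.single_apply

lemma coeffL_T_mul (m : ℤ) (p : L) (n : ℤ) : coeffL (T m * p) n = coeffL p (n - m) := by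
  unfold coeffL
  erw [AddMonoidAlgebra.coeff_single_mul_apply, one_mul, neg_add_eq_sub]

lemma coeffL_D (p : L) (n : ℤ) : coeffL (D p) n = ((n + 1 : ℤ) : ℂ) * coeffL p (n + 1) := by
  unfold D coeffL
  rw [AddMonoidAlgebra.coeff_finsuppSum, Finsupp.sum_apply, Finsupp.sum,
    Finset.sum_eq_single (n + 1)]
  · erw [AddMonoidAlgebra.coeff_smul_apply, Finsupp.single_apply, if_pos (by ring), smul_eq_mul,
      mul_one]
  · intro m _ hm
    erw [AddMonoidAlgebra.coeff_smul_apply, Finsupp.single_apply, if_neg (by omega), smul_zero]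
  · intro h
    rw [Finsupp.notMem_support_iff.mp h, mul_zero, zero_smul]
    rfl

lemma T_mul_mem_Lminus_iff (m : ℤ) (p : L) :
    T m * p ∈ Lminus ↔ ∀ s : ℤ, -m < s → coeffL p s = 0 := by
  refine ⟨fun h s hs => ?_, fun h n hn => ?_⟩
  · have := h (s + m) (by omega)
    rwa [coeffL_T_mul, add_sub_cancel_right] at this
  · rw [coeffL_T_mul]
    exact h _ (by omega)

lemma T_mul_sub_mem_Lminus_iff (m : ℤ) (c : ℂ) (p q : L) :
    T m * (p - c • (T (-1) * q)) ∈ Lminus ↔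
      ∀ s : ℤ, -m < s → coeffL p s = c * coeffL q (s + 1) := by
  simp only [T_mul_mem_Lminus_iff, coeffL_sub, coeffL_smul, coeffL_T_mul, sub_neg_eq_add,
    sub_eq_zero]

lemma mem_B0_iff (v : V) :
    v ∈ B0 ↔ ∀ i : Fin 6, ∀ n : ℤ, n < 0 → coeffL (v i) n = 0 := by
  simp [B0, Submodule.mem_pi, Lplus]

lemma mem_B1_iff (k1 k2 k3 : ℤ) (v : V) : v ∈ B1 k1 k2 k3 ↔
    (∀ s : ℤ, -(k1 + k2 - 2) < s → coeffL (v 0) s = 0) ∧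
    (∀ s : ℤ, -(k1 + k3 - 2) < s → coeffL (v 1) s = 0) ∧
    (∀ s : ℤ, -(k2 + k3 - 2) < s → coeffL (v 2) s = 0) ∧
    (∀ s : ℤ, -(k2 + k3) < s → coeffL (v 3) s = k1 * coeffL (v 2) (s + 1)) ∧
    (∀ s : ℤ, -(k1 + k3) < s → coeffL (v 4) s = -k2 * coeffL (v 1) (s + 1)) ∧
    (∀ s : ℤ, -(k1 + k2) < s → coeffL (v 5) s = k3 * coeffL (v 0) (s + 1)) := by
  simp only [B1, Submodule.mem_inf, Submodule.mem_comap, cndA, cndB, LinearMap.comp_apply,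
    LinearMap.mulLeft_apply, LinearMap.sub_apply, LinearMap.smul_apply, LinearMap.proj_apply,
    T_mul_sub_mem_Lminus_iff]
  simp only [T_mul_mem_Lminus_iff, and_assoc]

lemma mem_B_iff_exists_mem_B1 (k1 k2 k3 : ℤ) (v : V) : v ∈ B k1 k2 k3 ↔
    ∃ q ∈ B1 k1 k2 k3, ∀ i : Fin 6, ∀ n : ℤ, n < 0 →
      coeffL (v i) n = coeffL (q i) n := by
  constructor
  · intro h
    obtain ⟨p, hp, q, hq, rfl⟩ := Submodule.mem_sup.mp h
    refine ⟨q, hq, fun i n hn => ?_⟩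
    rw [Pi.add_apply, coeffL_add, (mem_B0_iff p).mp hp i n hn, zero_add]
  · rintro ⟨q, hq, hvq⟩
    refine Submodule.mem_sup.mpr
      ⟨v - q, (mem_B0_iff _).mpr fun i n hn => ?_, q, hq, sub_add_cancel v q⟩
    rw [Pi.sub_apply, coeffL_sub, hvq i n hn, sub_self]

def principalPart (p : L) : L :=
  AddMonoidAlgebra.ofCoeff ((AddMonoidAlgebra.coeff p : ℤ →₀ ℂ).filter (· < 0))

lemma coeffL_principalPart (p : L) (n : ℤ) :
    coeffL (principalPart p) n = if n < 0 then coeffL p n else 0 := by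
  unfold coeffL principalPart
  rw [AddMonoidAlgebra.coeff_ofCoeff, Finsupp.filter_apply]

lemma mem_B_221_iff (v : V) : v ∈ B 2 2 1 ↔
    coeffL (v 0) (-1) = 0 ∧ coeffL (v 3) (-1) = 0 ∧ coeffL (v 4) (-1) = 0 ∧
    coeffL (v 5) (-1) = 0 ∧ coeffL (v 5) (-2) = 0 ∧
    coeffL (v 3) (-2) = 2 * coeffL (v 2) (-1) ∧
    coeffL (v 4) (-2) = -2 * coeffL (v 1) (-1) ∧
    coeffL (v 5) (-3) = coeffL (v 0) (-2) := by
  rw [mem_B_iff_exists_mem_B1]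
  constructor
  · rintro ⟨q, hq, hvq⟩
    obtain ⟨h0, h1, h2, h3, h4, h5⟩ := (mem_B1_iff 2 2 1 q).mp hq
    norm_num [hvq, h0, h1, h2, h3, h4, h5]
  · rintro ⟨c1, c2, c3, c4, c5, c6, c7, c8⟩
    refine ⟨fun i => principalPart (v i), (mem_B1_iff 2 2 1 _).mpr ?_, fun i n hn => ?_⟩
    · refine ⟨?_, ?_, ?_, ?_, ?_, ?_⟩ <;> intro s hs <;> simp only [coeffL_principalPart] <;>
        obtain hneg | hnonneg := lt_or_ge s 0
      -- in nonnegative degrees both sides vanish; the few negative degrees are the hypotheses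
      all_goals first
        | (norm_num at hs; interval_cases s <;> norm_num [*])
        | simp [hnonneg.not_gt, show ¬ s + 1 < 0 by omega]
    · rw [coeffL_principalPart, if_pos hn]

def w₁ : V := ![T (-1), 0, 0, 0, 0, (1 / 2 : ℂ) • T (-2)]

def w₂ : V := ![0, 0, 0, -T (-1), T (-2), 0]

lemma E'op_w₁_mem_B : E'op w₁ ∈ B 2 2 1 := by
  simp only [mem_B_221_iff, E'op, Eop, Nop, w₁, Pi.add_apply, Matrix.cons_val, coeffL_add,
    coeffL_neg, coeffL_smul, coeffL_zero, coeffL_T, coeffL_D]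
  norm_num

lemma F'op_w₁_mem_B : F'op 2 2 1 w₁ ∈ B 2 2 1 := by
  simp only [mem_B_221_iff, F'op, Fop, Mop, w₁, Pi.add_apply, Matrix.cons_val, coeffL_add,
    coeffL_sub, coeffL_neg, coeffL_smul, coeffL_zero, coeffL_T, coeffL_T_mul, coeffL_D]
  norm_num

lemma E'op_w₂_mem_B : E'op w₂ ∈ B 2 2 1 := by
  simp only [mem_B_221_iff, E'op, Eop, Nop, w₂, Pi.add_apply, Matrix.cons_val, coeffL_add,
    coeffL_neg, coeffL_zero, coeffL_T, coeffL_D]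
  norm_num

lemma F'op_w₂_mem_B : F'op 2 2 1 w₂ ∈ B 2 2 1 := by
  simp only [mem_B_221_iff, F'op, Fop, Mop, w₂, Pi.add_apply, Matrix.cons_val, coeffL_add,
    coeffL_sub, coeffL_neg, coeffL_smul, coeffL_zero, coeffL_T, coeffL_T_mul, coeffL_D]
  norm_num

lemma smul_w₁_add_smul_w₂_mem_B_iff (α β : ℂ) :
    α • w₁ + β • w₂ ∈ B 2 2 1 ↔ α = 0 ∧ β = 0 := by
  simp only [mem_B_221_iff, w₁, w₂, Pi.add_apply, Pi.smul_apply, Matrix.cons_val, coeffL_add,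
    coeffL_neg, coeffL_smul, coeffL_zero, coeffL_T]
  norm_num
  exact fun hα hβ => ⟨hα, hβ⟩

lemma coeffL_of_E'op_mem_B {z : V} (h : E'op z ∈ B 2 2 1) :
    coeffL (z 4) (-1) = 0 ∧ coeffL (z 5) (-1) = 0 ∧
    coeffL (z 0) (-1) = 2 * coeffL (z 5) (-2) := by
  simp only [mem_B_221_iff, E'op, Eop, Nop, Pi.add_apply, Matrix.cons_val, coeffL_add, coeffL_neg,
    coeffL_zero, coeffL_D] at h
  norm_num at h
  exact ⟨h.1, h.2.1, h.2.2.2.2.symm⟩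

lemma coeffL_of_F'op_mem_B {z : V} (h : F'op 2 2 1 z ∈ B 2 2 1) :
    coeffL (z 3) (-2) = 2 * coeffL (z 2) (-1) ∧
    coeffL (z 4) (-2) = -2 * coeffL (z 1) (-1) - coeffL (z 3) (-1) ∧
    coeffL (z 5) (-3) = coeffL (z 0) (-2) := by
  simp only [mem_B_221_iff, F'op, Fop, Mop, Pi.add_apply, Matrix.cons_val, coeffL_add, coeffL_sub,
    coeffL_neg, coeffL_smul, coeffL_zero, coeffL_T_mul, coeffL_D] at h
  norm_num at h
  obtain ⟨h3, h4, -, h5, -⟩ := h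
  exact ⟨by linear_combination -h3, by linear_combination -h4, by linear_combination -h5⟩

lemma exists_sub_mem_B_of_invariant {z : V} (hE : E'op z ∈ B 2 2 1)
    (hF : F'op 2 2 1 z ∈ B 2 2 1) :
    ∃ α β : ℂ, z - (α • w₁ + β • w₂) ∈ B 2 2 1 := by
  obtain ⟨e4, e5, e0⟩ := coeffL_of_E'op_mem_B hE
  obtain ⟨f3, f4, f5⟩ := coeffL_of_F'op_mem_B hF
  refine ⟨coeffL (z 0) (-1), -coeffL (z 3) (-1), ?_⟩
  simp only [mem_B_221_iff, w₁, w₂, Pi.add_apply, Pi.sub_apply, Pi.smul_apply, Matrix.cons_val,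
    coeffL_add, coeffL_sub, coeffL_neg, coeffL_smul, coeffL_zero, coeffL_T]
  norm_num
  exact ⟨e4, e5, by linear_combination -e0 / 2, f3, by linear_combination f4, f5⟩

/-- For `(k₁, k₂, k₃) = (2, 2, 1)`, the 𝔰′-invariant part of `H¹(ℂℙ¹, T₂)` is
two-dimensional, with basis the classes of
`w₁ = (x⁻¹, 0, 0, 0, 0, (1/2)x⁻²)` and `w₂ = (0, 0, 0, −x⁻¹, x⁻², 0)`. -/
theorem stmt_7 (w1 w2 : V)
    (hw1 : w1 = ![T (-1), 0, 0, 0, 0, (1 / 2 : ℂ) • T (-2)])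
    (hw2 : w2 = ![0, 0, 0, -T (-1), T (-2), 0]) :
    (E'op w1 ∈ B 2 2 1 ∧ F'op 2 2 1 w1 ∈ B 2 2 1 ∧
     E'op w2 ∈ B 2 2 1 ∧ F'op 2 2 1 w2 ∈ B 2 2 1) ∧
    (∀ α β : ℂ, α • w1 + β • w2 ∈ B 2 2 1 → α = 0 ∧ β = 0) ∧
    (∀ z : V, E'op z ∈ B 2 2 1 → F'op 2 2 1 z ∈ B 2 2 1 →
      ∃ α β : ℂ, z - (α • w1 + β • w2) ∈ B 2 2 1) := by
  obtain rfl : w1 = w₁ := hw1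
  obtain rfl : w2 = w₂ := hw2
  exact ⟨⟨E'op_w₁_mem_B, F'op_w₁_mem_B, E'op_w₂_mem_B, F'op_w₂_mem_B⟩,
    fun α β => (smul_w₁_add_smul_w₂_mem_B_iff α β).mp,
    fun _ => exists_sub_mem_B_of_invariant⟩
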